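/- arXiv:1604.02890 — 4 statements merged into one kernel-verified Lean document; each statement's English description precedes it below -/
import Mathlib

section
/- Let β₁ > 1 > 0 > β₂ be real numbers. Then g = 1 is the unique solution in (0, ∞) of the equation β₁ (g^{-β₂} - 1) + β₂ (g^{-β₁} - 1) = 0. -/
theorem gfixp_unique_solution (β₁ β₂ : ℝ) (hβ₁ : 1 < β₁) (hβ₂ : β₂ < 0) :
    ∀ g : ℝ, 0 < g →
      (β₁ * (g ^ (-β₂) - 1) + β₂ * (g ^ (-β₁) - 1) = 0 ↔ g = 1) := by
  intro g hg
  constructor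
  · intro h
    rcases lt_trichotomy g 1 with hlt | heq | hgt
    · exfalso
      have a : g ^ (-β₂) < 1 := Real.rpow_lt_one hg.le hlt (by linarith)
      have b : 1 < g ^ (-β₁) :=
        (Real.one_lt_rpow_iff_of_pos hg).mpr (Or.inr ⟨hlt, by linarith⟩)
      nlinarith
    · exact heq
    · exfalso
      have a : 1 < g ^ (-β₂) :=
        (Real.one_lt_rpow_iff_of_pos hg).mpr (Or.inl ⟨hgt, by linarith⟩)
      have b : g ^ (-β₁) < 1 := Real.rpow_lt_one_of_one_lt_of_neg hgt (by linarith)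
      nlinarith
  · intro h
    simp [h, Real.one_rpow]
end

section
/- Let β₁ > 1 > 0 > β₂ with β₂ < -1, and K > 0. Define F₂(x) = ((β₁ - 1)(β₂ - 1) K x - β₂(β₁ - 1)) x^{β₂} for x > 0. Then F₂ is strictly decreasing on (0, β₂²/((β₂² - 1)K)), F₂(x) → +∞ as x → 0⁺, F₂(β₂²/((β₂² - 1)K)) = -(β₂(β₁ - 1)/(β₂ + 1))·(β₂²/((β₂² - 1)K))^{β₂} < 0, F₂ is strictly increasing on (β₂²/((β₂² - 1)K), ∞), and F₂(x) → 0 as x → ∞. -/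
/-!
Write `F₂ x = (a x - b) x ^ p` with `a = (β₁ - 1)(β₂ - 1)K < 0`, `b = β₂(β₁ - 1) < 0` and `p = β₂`.
Its derivative is `((p + 1) a x - p b) x ^ (p - 1)`, and `(p + 1) a > 0`, so the only critical point
is `c = p b / ((p + 1) a) = β₂² / ((β₂² - 1) K)`: `F₂` decreases before it and increases after it.
Near `0` the factor `a x - b` tends to `-b > 0` while `x ^ p → ∞`; at infinity
`F₂ x = a x ^ (p + 1) - b x ^ p → 0` because `p + 1 < 0`. Finally `a c - b = -b / (p + 1)`.
-/

open Filter Set Topology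

variable {a b p : ℝ}

lemma hasDerivAt_affine_mul_rpow {x : ℝ} (hx : 0 < x) :
    HasDerivAt (fun x => (a * x - b) * x ^ p) (((p + 1) * a * x - p * b) * x ^ (p - 1)) x := by
  have hlin : HasDerivAt (fun x => a * x - b) a x := by
    simpa using ((hasDerivAt_id x).const_mul a).sub_const b
  refine (hlin.mul (Real.hasDerivAt_rpow_const (Or.inl hx.ne'))).congr_deriv ?_
  rw [show x ^ p = x ^ (p - 1 + 1) by ring_nf, Real.rpow_add_one hx.ne']
  ring

lemma continuousOn_affine_mul_rpow {s : Set ℝ} (hs : s ⊆ Ioi 0) :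
    ContinuousOn (fun x => (a * x - b) * x ^ p) s := fun _ hx =>
  (hasDerivAt_affine_mul_rpow (hs hx)).continuousAt.continuousWithinAt

lemma strictAntiOn_affine_mul_rpow (hpa : 0 < (p + 1) * a) :
    StrictAntiOn (fun x => (a * x - b) * x ^ p) (Ioo 0 (p * b / ((p + 1) * a))) := by
  refine strictAntiOn_of_hasDerivWithinAt_neg (convex_Ioo _ _)
    (continuousOn_affine_mul_rpow Ioo_subset_Ioi_self)
    (fun x hx => (hasDerivAt_affine_mul_rpow (interior_subset hx).1).hasDerivWithinAt) ?_
  intro x hx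
  rw [interior_Ioo] at hx
  obtain ⟨hx₀, hxc⟩ := hx
  have hlin : (p + 1) * a * x < p * b := by
    rw [lt_div_iff₀ hpa] at hxc
    linarith
  exact mul_neg_of_neg_of_pos (by linarith) (Real.rpow_pos_of_pos hx₀ _)

lemma strictMonoOn_affine_mul_rpow (hpa : 0 < (p + 1) * a) (hc : 0 ≤ p * b / ((p + 1) * a)) :
    StrictMonoOn (fun x => (a * x - b) * x ^ p) (Ioi (p * b / ((p + 1) * a))) := by
  have hpos : Ioi (p * b / ((p + 1) * a)) ⊆ Ioi 0 := Ioi_subset_Ioi hc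
  refine strictMonoOn_of_hasDerivWithinAt_pos (convex_Ioi _) (continuousOn_affine_mul_rpow hpos)
    (fun x hx => (hasDerivAt_affine_mul_rpow (hpos (interior_subset hx))).hasDerivWithinAt) ?_
  intro x hx
  rw [interior_Ioi] at hx
  have hlin : p * b < (p + 1) * a * x := by
    rw [mem_Ioi, div_lt_iff₀ hpa] at hx
    linarith
  exact mul_pos (by linarith) (Real.rpow_pos_of_pos (hpos hx) _)

lemma mul_div_mul_sub_eq_neg_div (ha : a ≠ 0) (hp : p + 1 ≠ 0) :
    a * (p * b / ((p + 1) * a)) - b = -(b / (p + 1)) := by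
  field_simp
  ring

lemma tendsto_affine_mul_rpow_nhdsGT_zero (hb : b < 0) (hp : p < 0) :
    Tendsto (fun x => (a * x - b) * x ^ p) (𝓝[>] 0) atTop := by
  have hlin : Tendsto (fun x => a * x - b) (𝓝[>] 0) (𝓝 (-b)) := by
    have h : Tendsto (fun x => a * x - b) (𝓝 0) (𝓝 (a * 0 - b)) :=
      Continuous.tendsto (by fun_prop) 0
    simpa using h.mono_left nhdsWithin_le_nhds
  exact hlin.pos_mul_atTop (neg_pos.mpr hb) (tendsto_rpow_neg_nhdsGT_zero hp)

lemma tendsto_affine_mul_rpow_atTop (hp : p + 1 < 0) :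
    Tendsto (fun x => (a * x - b) * x ^ p) atTop (𝓝 0) := by
  have hdecay : ∀ {q : ℝ}, q < 0 → Tendsto (fun x : ℝ => x ^ q) atTop (𝓝 0) := fun {q} hq => by
    simpa using tendsto_rpow_neg_atTop (neg_pos.mpr hq)
  have h := ((hdecay hp).const_mul a).sub ((hdecay (by linarith : p < 0)).const_mul b)
  rw [mul_zero, mul_zero, sub_zero] at h
  refine h.congr' ?_
  filter_upwards [eventually_gt_atTop 0] with x hx
  rw [Real.rpow_add_one hx.ne']
  ring

theorem appendix_F2_shape_beta2_lt_neg_one (β₁ β₂ K : ℝ)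
    (hβ₁ : 1 < β₁) (hβ₂ : β₂ < -1) (hK : 0 < K)
    (F₂ : ℝ → ℝ)
    (hF₂ : ∀ x, F₂ x = ((β₁ - 1) * (β₂ - 1) * K * x - β₂ * (β₁ - 1)) * x ^ β₂) :
    StrictAntiOn F₂ (Set.Ioo 0 (β₂^2 / ((β₂^2 - 1) * K))) ∧
    Filter.Tendsto F₂ (nhdsWithin 0 (Set.Ioi 0)) Filter.atTop ∧
    (F₂ (β₂^2 / ((β₂^2 - 1) * K)) =
      -(β₂ * (β₁ - 1) / (β₂ + 1)) * (β₂^2 / ((β₂^2 - 1) * K)) ^ β₂ ∧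
      F₂ (β₂^2 / ((β₂^2 - 1) * K)) < 0) ∧
    StrictMonoOn F₂ (Set.Ioi (β₂^2 / ((β₂^2 - 1) * K))) ∧
    Filter.Tendsto F₂ Filter.atTop (nhds 0) := by
  have hsq : 0 < β₂ ^ 2 - 1 := by nlinarith
  have ha : (β₁ - 1) * (β₂ - 1) * K < 0 :=
    mul_neg_of_neg_of_pos (mul_neg_of_pos_of_neg (by linarith) (by linarith)) hK
  have hb : β₂ * (β₁ - 1) < 0 := mul_neg_of_neg_of_pos (by linarith) (by linarith)
  have hpa : 0 < (β₂ + 1) * ((β₁ - 1) * (β₂ - 1) * K) := mul_pos_of_neg_of_neg (by linarith) ha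
  have hc : β₂ ^ 2 / ((β₂ ^ 2 - 1) * K) =
      β₂ * (β₂ * (β₁ - 1)) / ((β₂ + 1) * ((β₁ - 1) * (β₂ - 1) * K)) := by
    field_simp [hsq.ne', show β₁ - 1 ≠ 0 by linarith, show β₂ + 1 ≠ 0 by linarith,
      show β₂ - 1 ≠ 0 by linarith]
    ring
  have hc₀ : 0 < β₂ ^ 2 / ((β₂ ^ 2 - 1) * K) := div_pos (by nlinarith) (mul_pos hsq hK)
  have hval : F₂ (β₂ ^ 2 / ((β₂ ^ 2 - 1) * K)) =
      -(β₂ * (β₁ - 1) / (β₂ + 1)) * (β₂ ^ 2 / ((β₂ ^ 2 - 1) * K)) ^ β₂ := by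
    rw [hF₂, hc, mul_div_mul_sub_eq_neg_div ha.ne (by linarith)]
  obtain rfl : F₂ = fun x => ((β₁ - 1) * (β₂ - 1) * K * x - β₂ * (β₁ - 1)) * x ^ β₂ := funext hF₂
  refine ⟨hc ▸ strictAntiOn_affine_mul_rpow hpa, tendsto_affine_mul_rpow_nhdsGT_zero hb (by linarith),
    ⟨hval, ?_⟩, hc ▸ strictMonoOn_affine_mul_rpow hpa (hc ▸ hc₀.le),
    tendsto_affine_mul_rpow_atTop (by linarith)⟩
  rw [hval]
  exact mul_neg_of_neg_of_pos (neg_neg_of_pos (div_pos_of_neg_of_neg hb (by linarith)))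
    (Real.rpow_pos_of_pos hc₀ _)
end

section
/- Let β₁ > 1 > 0 > β₂ with β₂ < -1, and K > 0. Then the equation ((β₁-1)(β₂-1)Kg - β₁(β₂-1)) g^{β₁} = ((β₁-1)(β₂-1)Kg - β₂(β₁-1)) g^{β₂} has exactly two solutions g in (0, ∞), and exactly one of them satisfies g > β₁²/((β₁² - 1)K). -/
/-!
With `A = (β₁ - 1) (β₂ - 1) K`, `B = β₁ (β₂ - 1)`, `C = β₂ (β₁ - 1)` and `p = β₁ - β₂`, dividing
by `g ^ β₂` turns the equation into `(A g - B) g ^ p = A g - C`.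
For two positive solutions `x < y` one has the identity
`A (B - C) (y - x) = (A x - B) (A y - B) (x ^ p - y ^ p)`,
so the left factor `A g - B` takes opposite signs at any two solutions; three solutions are
therefore impossible. Two solutions, one on each side of `M`, come from the intermediate value
theorem: the reduced function is `C < 0` at `0`, negative far out, and positive at
`M = β₁² / ((β₁² - 1) K)` because `M` lies between the zeros `C / A < B / A` of the two linear
factors.
-/

open Set

noncomputable def reducedEq (A B C p g : ℝ) : ℝ := (A * g - B) * g ^ p - (A * g - C)

section ReducedEq

variable {A B C p : ℝ}

lemma eq_iff_reducedEq_eq_zero {α β g : ℝ} (hg : 0 < g) :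
    (A * g - B) * g ^ α = (A * g - C) * g ^ β ↔ reducedEq A B C (α - β) g = 0 := by
  have hβ : 0 < g ^ β := Real.rpow_pos_of_pos hg β
  rw [reducedEq, Real.rpow_sub hg, sub_eq_zero, mul_div_assoc', div_eq_iff hβ.ne']

lemma continuous_reducedEq (hp : 0 ≤ p) : Continuous (reducedEq A B C p) := by
  have := Real.continuous_rpow_const hp
  unfold reducedEq
  fun_prop

lemma reducedEq_zero (hp : p ≠ 0) : reducedEq A B C p 0 = C := by
  simp [reducedEq, Real.zero_rpow hp]

lemma reducedEq_pos {g : ℝ} (hg : 0 < g) (hB : B < A * g) (hC : A * g < C) :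
    0 < reducedEq A B C p g := by
  have := mul_pos (sub_pos.2 hB) (Real.rpow_pos_of_pos hg p)
  unfold reducedEq
  linarith

/-- Past `B / A + 1` we have `A v - B ≤ A < 0`, so `v ≤ v ^ p` gives `(A v - B) v ^ p ≤ A v`
and the residual is at most `C`. -/
lemma exists_gt_reducedEq_neg (hp : 1 ≤ p) (hA : A < 0) (hC : C < 0) {g : ℝ} (hg : 0 ≤ g) :
    ∃ v, g < v ∧ reducedEq A B C p v < 0 := by
  set v := max g (B / A) + 1
  have hgv : g + 1 ≤ v := by linarith [le_max_left g (B / A)]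
  have hAv : A * v - B ≤ A := by
    have hBA : A * (B / A) = B := mul_div_cancel₀ B hA.ne
    nlinarith [le_max_right g (B / A)]
  have hvp : v ≤ v ^ p := Real.self_le_rpow_of_one_le (by linarith) hp
  have := mul_le_mul_of_nonpos_left hvp (by linarith : A * v - B ≤ 0)
  refine ⟨v, by linarith, ?_⟩
  unfold reducedEq
  nlinarith

lemma mul_neg_of_reducedEq_eq_zero (hp : 0 < p) (hABC : 0 < A * (B - C)) {x y : ℝ}
    (hx : 0 < x) (hxy : x < y) (hxE : reducedEq A B C p x = 0) (hyE : reducedEq A B C p y = 0) :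
    (A * x - B) * (A * y - B) < 0 := by
  rw [reducedEq, sub_eq_zero] at hxE hyE
  have hpow : x ^ p < y ^ p := Real.rpow_lt_rpow hx.le hxy hp
  have key : A * (B - C) * (y - x) = (A * x - B) * (A * y - B) * (x ^ p - y ^ p) := by
    linear_combination (A * x - B) * hyE - (A * y - B) * hxE
  nlinarith [mul_pos hABC (sub_pos.2 hxy)]

lemma pairwise_mul_neg_of_reducedEq_eq_zero (hp : 0 < p) (hABC : 0 < A * (B - C)) :
    {g | 0 < g ∧ reducedEq A B C p g = 0}.Pairwise fun x y => (A * x - B) * (A * y - B) < 0 := by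
  rintro x ⟨hx, hxE⟩ y ⟨hy, hyE⟩ hxy
  rcases hxy.lt_or_gt with hlt | hgt
  · exact mul_neg_of_reducedEq_eq_zero hp hABC hx hlt hxE hyE
  · rw [mul_comm]
    exact mul_neg_of_reducedEq_eq_zero hp hABC hy hgt hyE hxE

end ReducedEq

lemma eq_or_eq_of_pairwise_mul_neg {ι : Type*} {s : Set ι} {L : ι → ℝ}
    (hL : s.Pairwise fun x y => L x * L y < 0) {g₁ g₂ g : ι} (h₁ : g₁ ∈ s) (h₂ : g₂ ∈ s)
    (h₁₂ : g₁ ≠ g₂) (hg : g ∈ s) : g = g₁ ∨ g = g₂ := by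
  by_contra! hne
  have h01 := hL hg h₁ hne.1
  have h02 := hL hg h₂ hne.2
  have h12 := hL h₁ h₂ h₁₂
  nlinarith [mul_pos_of_neg_of_neg h01 h02, sq_nonneg (L g * L g₁ * L g₂)]

theorem exists_two_zeros_reducedEq {A B C p M : ℝ} (hp : 1 ≤ p) (hA : A < 0) (hC : C < 0)
    (hM : 0 < M) (hBM : B < A * M) (hMC : A * M < C) :
    ∃ g₁ g₂, M < g₁ ∧ 0 < g₂ ∧ g₂ < M ∧
      reducedEq A B C p g₁ = 0 ∧ reducedEq A B C p g₂ = 0 ∧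
      ∀ g, 0 < g → reducedEq A B C p g = 0 → g = g₁ ∨ g = g₂ := by
  have hcont : Continuous (reducedEq A B C p) := continuous_reducedEq (by linarith)
  have hposM := reducedEq_pos (p := p) hM hBM hMC
  obtain ⟨v, hMv, hv⟩ := exists_gt_reducedEq_neg (B := B) hp hA hC hM.le
  obtain ⟨g₂, ⟨hg₂, hg₂M⟩, hzero₂⟩ : ∃ g ∈ Ioo 0 M, reducedEq A B C p g = 0 :=
    intermediate_value_Ioo hM.le hcont.continuousOn
      ⟨(reducedEq_zero (by linarith)).trans_lt hC, hposM⟩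
  obtain ⟨g₁, ⟨hMg₁, -⟩, hzero₁⟩ : ∃ g ∈ Ioo M v, reducedEq A B C p g = 0 :=
    intermediate_value_Ioo' hMv.le hcont.continuousOn ⟨hv, hposM⟩
  have hABC : 0 < A * (B - C) := mul_pos_of_neg_of_neg hA (by linarith)
  refine ⟨g₁, g₂, hMg₁, hg₂, hg₂M, hzero₁, hzero₂, fun g hg hzero => ?_⟩
  exact eq_or_eq_of_pairwise_mul_neg (pairwise_mul_neg_of_reducedEq_eq_zero (by linarith) hABC)
    ⟨hM.trans hMg₁, hzero₁⟩ ⟨hg₂, hzero₂⟩ (hg₂M.trans hMg₁).ne' ⟨hg, hzero⟩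

theorem g35a_two_solutions (β₁ β₂ K : ℝ) (hβ₁ : 1 < β₁) (hβ₂ : β₂ < -1) (hK : 0 < K) :
    ∃ g₁ g₂ : ℝ, 0 < g₁ ∧ 0 < g₂ ∧ g₁ ≠ g₂ ∧
      (((β₁ - 1) * (β₂ - 1) * K * g₁ - β₁ * (β₂ - 1)) * g₁ ^ β₁ =
        ((β₁ - 1) * (β₂ - 1) * K * g₁ - β₂ * (β₁ - 1)) * g₁ ^ β₂) ∧
      (((β₁ - 1) * (β₂ - 1) * K * g₂ - β₁ * (β₂ - 1)) * g₂ ^ β₁ =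
        ((β₁ - 1) * (β₂ - 1) * K * g₂ - β₂ * (β₁ - 1)) * g₂ ^ β₂) ∧
      (∀ g : ℝ, 0 < g →
        ((β₁ - 1) * (β₂ - 1) * K * g - β₁ * (β₂ - 1)) * g ^ β₁ =
          ((β₁ - 1) * (β₂ - 1) * K * g - β₂ * (β₁ - 1)) * g ^ β₂ → g = g₁ ∨ g = g₂) ∧
      g₁ > β₁^2 / ((β₁^2 - 1) * K) ∧ ¬ g₂ > β₁^2 / ((β₁^2 - 1) * K) := by
  have hsq : 0 < β₁ ^ 2 - 1 := by nlinarith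
  have hM : 0 < β₁ ^ 2 / ((β₁ ^ 2 - 1) * K) := by positivity
  have hAM : (β₁ - 1) * (β₂ - 1) * K * (β₁ ^ 2 / ((β₁ ^ 2 - 1) * K)) =
      (β₂ - 1) * β₁ ^ 2 / (β₁ + 1) := by
    field_simp
    ring
  have hβ₁M : β₁ * (β₂ - 1) < (β₂ - 1) * β₁ ^ 2 / (β₁ + 1) := by
    rw [lt_div_iff₀ (by linarith)]
    nlinarith
  have hMβ₂ : (β₂ - 1) * β₁ ^ 2 / (β₁ + 1) < β₂ * (β₁ - 1) := by
    rw [div_lt_iff₀ (by linarith)]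
    nlinarith
  obtain ⟨g₁, g₂, hMg₁, hg₂, hg₂M, h₁, h₂, huniq⟩ :=
    exists_two_zeros_reducedEq (p := β₁ - β₂) (by linarith) (by nlinarith) (by nlinarith) hM
      (hAM ▸ hβ₁M) (hAM ▸ hMβ₂)
  refine ⟨g₁, g₂, hM.trans hMg₁, hg₂, (hg₂M.trans hMg₁).ne', (eq_iff_reducedEq_eq_zero
    (hM.trans hMg₁)).2 h₁, (eq_iff_reducedEq_eq_zero hg₂).2 h₂,
    fun g hg hE => huniq g hg ((eq_iff_reducedEq_eq_zero hg).1 hE), hMg₁, hg₂M.le.not_gt⟩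
end

section
/- Fix s > 0, β₁ > 1 > 0 > β₂, K > 0 and g > 0. Define b(y) = g·(s - y) for 0 < y < s. Then b is a solution of the ordinary differential equation b'(y) = Σ_{i=1,2} [β_{3-i} b(y) / ((β_i - 1)(β_{3-i} - 1) K b(y) - β_i β_{3-i} (s - y))] · [((s-y)/b(y))^{β_i} / (((s-y)/b(y))^{β_i} - ((s-y)/b(y))^{β_{3-i}})] if and only if g satisfies Σ_{i=1,2} (-1)^i (β_i(β_{3-i} - 1) - (β_i - 1)(β_{3-i} - 1) K g) g^{β_i} = 0. -/
/-!
The right-hand side of the ODE is `F (s - y) b` with `F = boundaryRhs β₁ β₂ K`, which is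
homogeneous of degree zero. Along the ray `b = g (s - y)` it is therefore the constant `F 1 g`,
while `b' = -g`; so the ODE holds at one (equivalently every) point iff `F 1 g = -g`, and
clearing the denominators of `F 1 g` (with `(1/g)^β = (g^β)⁻¹`) turns this into the algebraic
equation for `g`.
-/

open Real Set

noncomputable def boundaryRhs (β₁ β₂ K x b : ℝ) : ℝ :=
  β₂ * b / ((β₁ - 1) * (β₂ - 1) * K * b - β₁ * β₂ * x) *
      ((x / b) ^ β₁ / ((x / b) ^ β₁ - (x / b) ^ β₂)) +
    β₁ * b / ((β₂ - 1) * (β₁ - 1) * K * b - β₂ * β₁ * x) *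
      ((x / b) ^ β₂ / ((x / b) ^ β₂ - (x / b) ^ β₁))

theorem boundaryRhs_mul_mul (β₁ β₂ K x b : ℝ) {t : ℝ} (ht : t ≠ 0) :
    boundaryRhs β₁ β₂ K (t * x) (t * b) = boundaryRhs β₁ β₂ K x b := by
  have hD₁ : (β₁ - 1) * (β₂ - 1) * K * (t * b) - β₁ * β₂ * (t * x) =
      t * ((β₁ - 1) * (β₂ - 1) * K * b - β₁ * β₂ * x) := by ring
  have hD₂ : (β₂ - 1) * (β₁ - 1) * K * (t * b) - β₂ * β₁ * (t * x) =
      t * ((β₂ - 1) * (β₁ - 1) * K * b - β₂ * β₁ * x) := by ring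
  unfold boundaryRhs
  rw [hD₁, hD₂, mul_div_mul_left x b ht, mul_left_comm β₁, mul_left_comm β₂,
    mul_div_mul_left _ _ ht, mul_div_mul_left _ _ ht]

theorem weighted_ratio_sum_eq_neg_iff {β₁ β₂ D g u v : ℝ} (hg : g ≠ 0) (hD : D ≠ 0)
    (huv : u - v ≠ 0) :
    β₂ * g / D * (u / (u - v)) + β₁ * g / D * (v / (v - u)) = -g ↔
      (D + β₂) * u = (D + β₁) * v := by
  have hvu : v - u ≠ 0 := sub_ne_zero.2 (sub_ne_zero.1 huv).symm
  field_simp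
  constructor
  · intro h
    have hfactor : (v - u) * (u * (D + β₂) - v * (D + β₁)) = 0 := by linear_combination h
    exact sub_eq_zero.1 ((mul_eq_zero.1 hfactor).resolve_left hvu)
  · intro h
    linear_combination (v - u) * h

theorem boundaryRhs_one_eq_neg_iff {β₁ β₂ K g : ℝ} (hg : 0 < g)
    (hD : (β₁ - 1) * (β₂ - 1) * K * g - β₁ * β₂ ≠ 0)
    (hc : g⁻¹ ^ β₁ - g⁻¹ ^ β₂ ≠ 0) :
    boundaryRhs β₁ β₂ K 1 g = -g ↔
      -(β₁ * (β₂ - 1) - (β₁ - 1) * (β₂ - 1) * K * g) * g ^ β₁ +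
        (β₂ * (β₁ - 1) - (β₂ - 1) * (β₁ - 1) * K * g) * g ^ β₂ = 0 := by
  set D := (β₁ - 1) * (β₂ - 1) * K * g - β₁ * β₂
  have hD₁ : (β₁ - 1) * (β₂ - 1) * K * g - β₁ * β₂ * 1 = D := by ring
  have hD₂ : (β₂ - 1) * (β₁ - 1) * K * g - β₂ * β₁ * 1 = D := by ring
  have hpoly : -(β₁ * (β₂ - 1) - (β₁ - 1) * (β₂ - 1) * K * g) * g ^ β₁ +
      (β₂ * (β₁ - 1) - (β₂ - 1) * (β₁ - 1) * K * g) * g ^ β₂ =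
      (D + β₁) * g ^ β₁ - (D + β₂) * g ^ β₂ := by ring
  have hA := (rpow_pos_of_pos hg β₁).ne'
  have hB := (rpow_pos_of_pos hg β₂).ne'
  rw [boundaryRhs, one_div, hD₁, hD₂, weighted_ratio_sum_eq_neg_iff hg.ne' hD hc,
    inv_rpow hg.le, inv_rpow hg.le, hpoly, sub_eq_zero,
    ← div_eq_mul_inv, ← div_eq_mul_inv, div_eq_div_iff hA hB, eq_comm]

theorem linear_boundary_solves_ode_general (s β₁ β₂ K g : ℝ) (hs : 0 < s)
    (hg : 0 < g)
    (b : ℝ → ℝ) (hb : ∀ y, b y = g * (s - y))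
    (hden₁ : ∀ y ∈ Set.Ioo 0 s,
      ((s - y) / b y) ^ β₁ - ((s - y) / b y) ^ β₂ ≠ 0)
    (hden₂ : ∀ y ∈ Set.Ioo 0 s,
      (β₁ - 1) * (β₂ - 1) * K * b y - β₁ * β₂ * (s - y) ≠ 0) :
    (∀ y ∈ Set.Ioo 0 s,
      deriv b y =
        β₂ * b y / ((β₁ - 1) * (β₂ - 1) * K * b y - β₁ * β₂ * (s - y)) *
          (((s - y) / b y) ^ β₁ / (((s - y) / b y) ^ β₁ - ((s - y) / b y) ^ β₂)) +
        β₁ * b y / ((β₂ - 1) * (β₁ - 1) * K * b y - β₂ * β₁ * (s - y)) *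
          (((s - y) / b y) ^ β₂ / (((s - y) / b y) ^ β₂ - ((s - y) / b y) ^ β₁)))
    ↔ (-(β₁ * (β₂ - 1) - (β₁ - 1) * (β₂ - 1) * K * g) * g ^ β₁ +
        (β₂ * (β₁ - 1) - (β₂ - 1) * (β₁ - 1) * K * g) * g ^ β₂ = 0) := by
  have hderiv (y : ℝ) : deriv b y = -g := by
    rw [show b = fun y => g * (s - y) from funext hb]
    simp
  have hode : ∀ y ∈ Ioo 0 s, deriv b y = boundaryRhs β₁ β₂ K (s - y) (b y) ↔
      -(β₁ * (β₂ - 1) - (β₁ - 1) * (β₂ - 1) * K * g) * g ^ β₁ +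
        (β₂ * (β₁ - 1) - (β₂ - 1) * (β₁ - 1) * K * g) * g ^ β₂ = 0 := by
    intro y hy
    have hx : s - y ≠ 0 := (sub_pos.2 hy.2).ne'
    have hratio : (s - y) / b y = g⁻¹ := by rw [hb, div_mul_cancel_right₀ hx]
    have hc := hden₁ y hy
    rw [hratio] at hc
    have hD : (β₁ - 1) * (β₂ - 1) * K * g - β₁ * β₂ ≠ 0 := fun hzero =>
      hden₂ y hy (by rw [hb]; linear_combination (s - y) * hzero)
    have hhom : boundaryRhs β₁ β₂ K (s - y) (g * (s - y)) = boundaryRhs β₁ β₂ K 1 g := by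
      simpa only [mul_one, mul_comm (s - y) g] using boundaryRhs_mul_mul β₁ β₂ K 1 g hx
    rw [hderiv, hb, hhom, eq_comm]
    exact boundaryRhs_one_eq_neg_iff hg hD hc
  have hmid : s / 2 ∈ Ioo 0 s := ⟨half_pos hs, half_lt_self hs⟩
  exact ⟨fun h => (hode _ hmid).1 (h _ hmid), fun h y hy => (hode y hy).2 h⟩

theorem linear_boundary_solves_ode (s β₁ β₂ K g : ℝ) (hs : 0 < s)
    (hβ₁ : 1 < β₁) (hβ₂ : β₂ < 0) (hK : 0 < K) (hg : 0 < g)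
    (b : ℝ → ℝ) (hb : ∀ y, b y = g * (s - y))
    (hden₁ : ∀ y ∈ Set.Ioo 0 s,
      ((s - y) / b y) ^ β₁ - ((s - y) / b y) ^ β₂ ≠ 0)
    (hden₂ : ∀ y ∈ Set.Ioo 0 s,
      (β₁ - 1) * (β₂ - 1) * K * b y - β₁ * β₂ * (s - y) ≠ 0) :
    (∀ y ∈ Set.Ioo 0 s,
      deriv b y =
        β₂ * b y / ((β₁ - 1) * (β₂ - 1) * K * b y - β₁ * β₂ * (s - y)) *
          (((s - y) / b y) ^ β₁ / (((s - y) / b y) ^ β₁ - ((s - y) / b y) ^ β₂)) +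
        β₁ * b y / ((β₂ - 1) * (β₁ - 1) * K * b y - β₂ * β₁ * (s - y)) *
          (((s - y) / b y) ^ β₂ / (((s - y) / b y) ^ β₂ - ((s - y) / b y) ^ β₁)))
    ↔ (-(β₁ * (β₂ - 1) - (β₁ - 1) * (β₂ - 1) * K * g) * g ^ β₁ +
        (β₂ * (β₁ - 1) - (β₂ - 1) * (β₁ - 1) * K * g) * g ^ β₂ = 0) :=
  linear_boundary_solves_ode_general s β₁ β₂ K g hs hg b hb hden₁ hden₂
end
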